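/- arXiv:1105.1683 — 2 statements merged into one kernel-verified Lean document; each statement's English description precedes it below -/
import Mathlib

section
/- Let G = (V,E) be a finite simple graph, let p ∈ [0,1]^V lie in the Shearer set of G, and let c ∈ [0,1]^V. Define r ∈ [0,1]^V by r_v := p_v + c_v − c_v p_v (equivalently 1 − r_v = (1 − p_v)(1 − c_v)). Then r lies in the Shearer set of G, and if Y is distributed according to Shearer's measure μ_{G,p} and X is distributed according to the Bernoulli product field π_c independently of Y, then the coordinatewise maximum Y ∨ X is distributed according to Shearer's measure μ_{G,r}. In particular μ_{G,p} is stochastically dominated by μ_{G,r}. -/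
open MeasureTheory Finset
open scoped Classical

/-- The critical function Ξ_{G[W]}(p). -/
noncomputable def Xi {V : Type*} (G : SimpleGraph V) (W : Finset V) (p : V → ℝ) : ℝ :=
  ∑ T ∈ W.powerset,
    if ∀ u ∈ T, ∀ w ∈ T, ¬ G.Adj u w then ∏ v ∈ T, -(1 - p v) else 0

/-- Cylinder event. -/
def cylEvt {V : Type*} (S : Finset V) (s : V → Bool) : Set (V → Bool) :=
  {ω | ∀ v ∈ S, ω v = s v}

def WeakDep {V : Type*} (G : SimpleGraph V) (p : V → ℝ)
    (μ : Measure (V → Bool)) : Prop :=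
  IsProbabilityMeasure μ ∧
  ∀ (v : V) (S : Finset V), (∀ w ∈ S, w ≠ v ∧ ¬ G.Adj v w) →
    ∀ s : V → Bool, 0 < (μ (cylEvt S s)).toReal →
      p v ≤ (μ ({ω | ω v = true} ∩ cylEvt S s)).toReal / (μ (cylEvt S s)).toReal

def StrongDep {V : Type*} (G : SimpleGraph V) (p : V → ℝ)
    (μ : Measure (V → Bool)) : Prop :=
  IsProbabilityMeasure μ ∧
  (∀ v : V, (μ {ω | ω v = true}).toReal = p v) ∧
  ∀ (S₁ S₂ : Finset V), (∀ u ∈ S₁, ∀ w ∈ S₂, u ≠ w ∧ ¬ G.Adj u w) →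
    ∀ s₁ s₂ : V → Bool,
      μ (cylEvt S₁ s₁ ∩ cylEvt S₂ s₂) = μ (cylEvt S₁ s₁) * μ (cylEvt S₂ s₂)

/-- Expectation of f under product field π_c restricted to W. -/
noncomputable def prodExp {V : Type*} (c : V → ℝ) (W : Finset V)
    (f : (W → Bool) → ℝ) : ℝ :=
  ∑ s : W → Bool, (∏ v : W, if s v then c v.1 else 1 - c v.1) * f s

/-- μ stochastically dominates the Bernoulli product field π_c. -/
def DomProd {V : Type*} (μ : Measure (V → Bool)) (c : V → ℝ) : Prop :=
  ∀ (W : Finset V) (f : (W → Bool) → ℝ), Monotone f →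
    prodExp c W f ≤ ∫ ω, f (fun v => ω v.1) ∂μ

/-- ν is the Bernoulli product field π_c. -/
def IsProduct {V : Type*} (c : V → ℝ) (μ : Measure (V → Bool)) : Prop :=
  IsProbabilityMeasure μ ∧
  ∀ (S : Finset V) (s : V → Bool),
    μ (cylEvt S s) = ∏ v ∈ S, ENNReal.ofReal (if s v then c v else 1 - c v)

/-- μ is Shearer's measure μ_{G,p}. -/
def IsShearer {V : Type*} [Fintype V] (G : SimpleGraph V) (p : V → ℝ)
    (μ : Measure (V → Bool)) : Prop :=
  IsProbabilityMeasure μ ∧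
  ∀ W : Finset V,
    (μ {ω | ∀ v, (ω v = false ↔ v ∈ W)}).toReal =
      ∑ T ∈ (Finset.univ : Finset V).powerset,
        if W ⊆ T ∧ ∀ u ∈ T, ∀ w ∈ T, ¬ G.Adj u w
        then (-1 : ℝ) ^ (T.card - W.card) * ∏ v ∈ T, (1 - p v) else 0

/-- The law of the coordinatewise maximum of two independent BRFs with laws μ, ν. -/
noncomputable def maxLaw {V : Type*} (μ ν : Measure (V → Bool)) : Measure (V → Bool) :=
  Measure.map (fun ω : (V → Bool) × (V → Bool) => fun v => ω.1 v || ω.2 v) (μ.prod ν)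

/-!
Under Shearer's measure `μ_{G,p}` the probability that `Y` vanishes on all of `T` is `∏_{v ∈ T} q_v`
for independent `T` and `0` otherwise; by Möbius inversion on the Boolean lattice these
"all-zero" probabilities determine the atoms, so they characterize `μ_{G,p}`. The zero set of
`Y ∨ X` is the intersection of the zero sets of `Y` and `X`, so by independence its all-zero
probabilities are `∏_{v ∈ T} q_v (1 - c_v) = ∏_{v ∈ T} (1 - r_v)` on independent `T`: this is
the characterization of `μ_{G,r}`. By inclusion–exclusion, `Ξ_{G[W]}(r)` is then the probability
that `Y ∨ X` has no zero in `W`, hence nonnegative, and `Y ≤ Y ∨ X` gives the domination.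
-/

section Moebius

variable {α : Type*} [DecidableEq α]

theorem sum_Icc_neg_one_pow_card_sub {s t : Finset α} (h : s ⊆ t) :
    ∑ u ∈ Icc s t, (-1 : ℝ) ^ (#u - #s) = if s = t then 1 else 0 := by
  have hdisj : ∀ a ∈ (t \ s).powerset, Disjoint s a := fun a ha =>
    disjoint_sdiff.mono_right (mem_powerset.mp ha)
  have hinj : Set.InjOn (s ∪ ·) ((t \ s).powerset : Set (Finset α)) := fun a ha b hb hab => by
    rw [← union_sdiff_cancel_left (hdisj a ha), ← union_sdiff_cancel_left (hdisj b hb)]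
    exact congrArg (· \ s) hab
  have hsum := congrArg (Int.cast : ℤ → ℝ) (sum_powerset_neg_one_pow_card (x := t \ s))
  push_cast at hsum
  rw [Icc_eq_image_powerset h, sum_image hinj,
    sum_congr rfl fun a ha => by rw [card_union_of_disjoint (hdisj a ha), Nat.add_sub_cancel_left],
    hsum]
  exact if_congr
    (sdiff_eq_empty_iff_subset.trans (subset_antisymm_iff.trans (and_iff_right h)).symm) rfl rfl

omit [DecidableEq α] in
theorem neg_one_pow_card_sub_eq_mul {s u t : Finset α} (hsu : s ⊆ u) (hut : u ⊆ t) :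
    (-1 : ℝ) ^ (#t - #u) = (-1) ^ (#t - #s) * (-1) ^ (#u - #s) := by
  have := card_le_card hsu
  have := card_le_card hut
  rw [show #t - #s = (#t - #u) + (#u - #s) by omega, pow_add, mul_assoc, ← mul_pow, neg_one_mul,
    neg_neg, one_pow, mul_one]

theorem sum_Icc_neg_one_pow_sub_card {s t : Finset α} (h : s ⊆ t) :
    ∑ u ∈ Icc s t, (-1 : ℝ) ^ (#t - #u) = if s = t then 1 else 0 := by
  rw [sum_congr rfl fun u hu => neg_one_pow_card_sub_eq_mul (mem_Icc.mp hu).1 (mem_Icc.mp hu).2,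
    ← mul_sum, sum_Icc_neg_one_pow_card_sub h]
  split_ifs with hst <;> simp [hst]

variable [Fintype α]

theorem sum_Ici_sum_Ici_neg_one_pow (g : Finset α → ℝ) (s : Finset α) :
    ∑ u ∈ Ici s, ∑ t ∈ Ici u, (-1 : ℝ) ^ (#t - #u) * g t = g s := by
  rw [sum_comm' (t' := Ici s) (s' := Icc s) fun u t => by
    simp only [mem_Ici, mem_Icc]
    exact ⟨fun h => ⟨⟨h.1, h.2⟩, h.1.trans h.2⟩, fun h => h.1⟩]
  simp_rw [← sum_mul]
  rw [sum_eq_single_of_mem s (mem_Ici.mpr le_rfl) fun t ht hts => by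
      rw [sum_Icc_neg_one_pow_sub_card (mem_Ici.mp ht), if_neg (Ne.symm hts), zero_mul],
    Icc_self, sum_singleton, Nat.sub_self, pow_zero, one_mul]

theorem sum_Ici_neg_one_pow_mul_sum_Ici (f : Finset α → ℝ) (s : Finset α) :
    ∑ t ∈ Ici s, (-1 : ℝ) ^ (#t - #s) * ∑ u ∈ Ici t, f u = f s := by
  simp_rw [mul_sum]
  rw [sum_comm' (t' := Ici s) (s' := fun u => Icc s u) fun t u => by
    simp only [mem_Ici, mem_Icc]
    exact ⟨fun h => ⟨⟨h.1, h.2⟩, h.1.trans h.2⟩, fun h => h.1⟩]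
  simp_rw [← sum_mul]
  rw [sum_eq_single_of_mem s (mem_Ici.mpr le_rfl) fun u hu hus => by
      rw [sum_Icc_neg_one_pow_card_sub (mem_Ici.mp hu), if_neg (Ne.symm hus), zero_mul],
    Icc_self, sum_singleton, Nat.sub_self, pow_zero, one_mul]

theorem sum_powerset_neg_one_pow_mul_sum_Ici (f : Finset α → ℝ) (s : Finset α) :
    ∑ t ∈ s.powerset, (-1 : ℝ) ^ #t * ∑ u ∈ Ici t, f u = ∑ u with Disjoint u s, f u := by
  simp_rw [mul_sum]
  rw [sum_comm' (t' := univ) (s' := fun u => (u ∩ s).powerset) fun t u => by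
    simp only [mem_powerset, mem_Ici, mem_univ, and_true, subset_inter_iff]
    exact And.comm]
  simp_rw [← sum_mul]
  have hsum (u : Finset α) :=
    congrArg (Int.cast : ℤ → ℝ) (sum_powerset_neg_one_pow_card (x := u ∩ s))
  push_cast at hsum
  simp_rw [hsum, ite_mul, one_mul, zero_mul, ← disjoint_iff_inter_eq_empty]
  rw [sum_ite, sum_const_zero, add_zero]

end Moebius

section ZeroSet

variable {V : Type*} [Fintype V]

def zeroSet (ω : V → Bool) : Finset V := {v | ω v = false}

theorem zeroSet_or (y x : V → Bool) : zeroSet (fun v => y v || x v) = zeroSet y ∩ zeroSet x := by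
  ext v
  simp [zeroSet]

theorem setOf_zeroSet_iff_eq (W : Finset V) :
    {ω : V → Bool | ∀ v, ω v = false ↔ v ∈ W} = zeroSet ⁻¹' {W} := by
  ext ω
  simp [zeroSet, Finset.ext_iff]

theorem measureReal_subset_zeroSet_eq_sum (μ : Measure (V → Bool)) [IsFiniteMeasure μ]
    (W : Finset V) :
    μ.real {ω | W ⊆ zeroSet ω} = ∑ A ∈ Ici W, μ.real (zeroSet ⁻¹' {A}) := by
  rw [sum_measureReal_preimage_singleton _ fun _ _ => (Set.toFinite _).measurableSet]
  congr 1
  ext ω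
  simp

theorem IsProduct.measureReal_subset_zeroSet {c : V → ℝ} {ν : Measure (V → Bool)}
    (hν : IsProduct c ν) (hc : ∀ v, c v ≤ 1) (W : Finset V) :
    ν.real {ω | W ⊆ zeroSet ω} = ∏ v ∈ W, (1 - c v) := by
  have hcyl : {ω | W ⊆ zeroSet ω} = cylEvt W fun _ => false := by
    ext ω
    simp [cylEvt, zeroSet, subset_iff]
  rw [hcyl, measureReal_def, hν.2, ENNReal.toReal_prod]
  exact prod_congr rfl fun v _ => by simp [sub_nonneg.mpr (hc v)]

theorem maxLaw_measureReal_subset_zeroSet (μ ν : Measure (V → Bool)) [SFinite ν] (W : Finset V) :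
    (maxLaw μ ν).real {ω | W ⊆ zeroSet ω} =
      μ.real {ω | W ⊆ zeroSet ω} * ν.real {ω | W ⊆ zeroSet ω} := by
  have hpre : (fun ω : (V → Bool) × (V → Bool) => fun v => ω.1 v || ω.2 v) ⁻¹'
      {ω | W ⊆ zeroSet ω} = {ω | W ⊆ zeroSet ω} ×ˢ {ω | W ⊆ zeroSet ω} := by
    ext ω
    simp [zeroSet_or, subset_inter_iff]
  rw [measureReal_def, maxLaw, Measure.map_apply (measurable_of_countable _)
    (Set.toFinite _).measurableSet, hpre, Measure.prod_prod, ENNReal.toReal_mul]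
  rfl

theorem integral_le_integral_maxLaw {μ ν : Measure (V → Bool)} [IsFiniteMeasure μ]
    [IsProbabilityMeasure ν] {f : (V → Bool) → ℝ} (hf : Monotone f) :
    ∫ ω, f ω ∂μ ≤ ∫ ω, f ω ∂(maxLaw μ ν) := by
  calc ∫ ω, f ω ∂μ = ∫ z, f z.1 ∂(μ.prod ν) := by simp [integral_fun_fst]
    _ ≤ ∫ z, f (fun v => z.1 v || z.2 v) ∂(μ.prod ν) :=
      integral_mono .of_finite .of_finite fun z => hf fun v => Bool.left_le_or _ _
    _ = ∫ ω, f ω ∂(maxLaw μ ν) :=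
      (integral_map (measurable_of_countable _).aemeasurable .of_discrete).symm

end ZeroSet

section Shearer

variable {V : Type*}

noncomputable def indepProd (G : SimpleGraph V) (q : V → ℝ) (T : Finset V) : ℝ :=
  if ∀ u ∈ T, ∀ w ∈ T, ¬ G.Adj u w then ∏ v ∈ T, q v else 0

theorem indepProd_mul (G : SimpleGraph V) (q q' : V → ℝ) (T : Finset V) :
    indepProd G (fun v => q v * q' v) T = indepProd G q T * ∏ v ∈ T, q' v := by
  unfold indepProd
  split_ifs <;> simp [prod_mul_distrib]

theorem xi_eq_sum_powerset (G : SimpleGraph V) (W : Finset V) (p : V → ℝ) :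
    Xi G W p = ∑ T ∈ W.powerset, (-1 : ℝ) ^ #T * indepProd G (fun v => 1 - p v) T := by
  unfold Xi indepProd
  simp_rw [mul_ite, mul_zero, prod_neg]

variable [Fintype V]

theorem sum_shearer_eq_sum_Ici (G : SimpleGraph V) (p : V → ℝ) (W : Finset V) :
    ∑ T ∈ (univ : Finset V).powerset,
        (if W ⊆ T ∧ ∀ u ∈ T, ∀ w ∈ T, ¬ G.Adj u w
        then (-1 : ℝ) ^ (#T - #W) * ∏ v ∈ T, (1 - p v) else 0) =
      ∑ T ∈ Ici W, (-1 : ℝ) ^ (#T - #W) * indepProd G (fun v => 1 - p v) T := by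
  simp_rw [ite_and, indepProd, mul_ite, mul_zero]
  rw [← sum_filter]
  congr 1
  ext T
  simp

theorem isShearer_iff (G : SimpleGraph V) (p : V → ℝ) (μ : Measure (V → Bool)) :
    IsShearer G p μ ↔ IsProbabilityMeasure μ ∧
      ∀ W, μ.real {ω | W ⊆ zeroSet ω} = indepProd G (fun v => 1 - p v) W := by
  simp_rw [IsShearer, setOf_zeroSet_iff_eq, ← measureReal_def, sum_shearer_eq_sum_Ici]
  refine and_congr_right fun _ => ⟨fun h W => ?_, fun h W => ?_⟩
  · simp_rw [measureReal_subset_zeroSet_eq_sum, h]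
    exact sum_Ici_sum_Ici_neg_one_pow _ W
  · simp_rw [← h, measureReal_subset_zeroSet_eq_sum]
    exact (sum_Ici_neg_one_pow_mul_sum_Ici (fun A => μ.real (zeroSet ⁻¹' {A})) W).symm

theorem IsShearer.xi_nonneg {G : SimpleGraph V} {p : V → ℝ} {μ : Measure (V → Bool)}
    (hμ : IsShearer G p μ) (W : Finset V) : 0 ≤ Xi G W p := by
  obtain ⟨_, hzero⟩ := (isShearer_iff G p μ).mp hμ
  simp_rw [xi_eq_sum_powerset, ← hzero, measureReal_subset_zeroSet_eq_sum,
    sum_powerset_neg_one_pow_mul_sum_Ici]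
  exact sum_nonneg fun _ _ => measureReal_nonneg

theorem isShearer_maxLaw {G : SimpleGraph V} {p c : V → ℝ} {μ ν : Measure (V → Bool)}
    (hμ : IsShearer G p μ) (hν : IsProduct c ν) (hc : ∀ v, c v ≤ 1) :
    IsShearer G (fun v => p v + c v - c v * p v) (maxLaw μ ν) := by
  have := hμ.1
  have := hν.1
  have hr : (fun v => 1 - (p v + c v - c v * p v)) = fun v => (1 - p v) * (1 - c v) :=
    funext fun v => by ring
  obtain ⟨_, hzero⟩ := (isShearer_iff G p μ).mp hμ
  refine (isShearer_iff _ _ _).mpr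
    ⟨Measure.isProbabilityMeasure_map (measurable_of_countable _).aemeasurable, fun W => ?_⟩
  rw [maxLaw_measureReal_subset_zeroSet, hzero, hν.measureReal_subset_zeroSet hc, hr,
    indepProd_mul]

end Shearer

theorem stmt18_general {V : Type*} [Fintype V] (G : SimpleGraph V) (p c : V → ℝ)
    (hc : ∀ v, c v ∈ Set.Icc (0:ℝ) 1)
    (μ ν : Measure (V → Bool)) (hμ : IsShearer G p μ) (hν : IsProduct c ν) :
    (∀ W : Finset V, 0 ≤ Xi G W (fun v => p v + c v - c v * p v)) ∧
    IsShearer G (fun v => p v + c v - c v * p v) (maxLaw μ ν) ∧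
    ∀ f : (V → Bool) → ℝ, Monotone f →
      ∫ ω, f ω ∂μ ≤ ∫ ω, f ω ∂(maxLaw μ ν) := by
  have hmax := isShearer_maxLaw hμ hν fun v => (hc v).2
  have := hμ.1
  have := hν.1
  exact ⟨hmax.xi_nonneg, hmax, fun f hf => integral_le_integral_maxLaw hf⟩

/-- thinning zeros of Shearer's measure by an independent product
field yields Shearer's measure with parameter r = p + c - c·p; in particular
μ_{G,p} is stochastically dominated by μ_{G,r}. -/
theorem stmt18 {V : Type*} [Fintype V] (G : SimpleGraph V) (p c : V → ℝ)
    (hp : ∀ v, p v ∈ Set.Icc (0:ℝ) 1) (hc : ∀ v, c v ∈ Set.Icc (0:ℝ) 1)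
    (hShearer : ∀ W : Finset V, 0 ≤ Xi G W p)
    (μ ν : Measure (V → Bool)) (hμ : IsShearer G p μ) (hν : IsProduct c ν) :
    (∀ W : Finset V, 0 ≤ Xi G W (fun v => p v + c v - c v * p v)) ∧
    IsShearer G (fun v => p v + c v - c v * p v) (maxLaw μ ν) ∧
    ∀ f : (V → Bool) → ℝ, Monotone f →
      ∫ ω, f ω ∂μ ≤ ∫ ω, f ω ∂(maxLaw μ ν) :=
  stmt18_general G p c hc μ ν hμ hν
end

section
/- For every ε > 0 there exists K ∈ ℕ such that for every integer k ≥ K and every σ ∈ [0,1]: if (1 − σ)^{k+1} ≥ k^k / (k+1)^{k+1}, then σ ≤ (1 + (1+ε)·ln(k+1)) / (k+1). In particular, for every ε > 0 and all sufficiently large k, 1 − k^{k/(k+1)}/(k+1) ≤ 1/(k+1) + (1 − (k+1)^{−1/(k+1)}) ≤ (1 + (1+ε)·ln(k+1)) / (k+1). -/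
/-!
Taking `(k + 1)`-th roots, the hypothesis says `1 - σ ≥ k ^ (k / (k + 1)) / (k + 1)`. Writing
`k ^ (k / (k + 1)) ≥ (k + 1) ^ (k / (k + 1)) - 1` (subadditivity of `t ↦ t ^ p` for `p ≤ 1`) gives
`σ ≤ 1 / (k + 1) + (1 - (k + 1) ^ (-1 / (k + 1)))`, and `1 - e ^ (-t) ≤ t` bounds the bracket by
`log (k + 1) / (k + 1)`.
-/

open Real

lemma one_sub_rpow_neg_le_mul_log {b : ℝ} (hb : 0 < b) (t : ℝ) : 1 - b ^ (-t) ≤ t * log b := by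
  have h := one_sub_le_exp_neg (t * log b)
  rw [rpow_def_of_pos hb, show log b * -t = -(t * log b) by ring]
  linarith

lemma rpow_div_div_succ_le_of_le_pow {x s : ℝ} (hx : 0 ≤ x) (hs : 0 ≤ s) (n : ℕ)
    (h : x ^ n / (x + 1) ^ (n + 1) ≤ s ^ (n + 1)) :
    x ^ ((n : ℝ) / (n + 1)) / (x + 1) ≤ s := by
  have hn : (0 : ℝ) < n + 1 := by positivity
  have hroot : (x ^ n / (x + 1) ^ (n + 1)) ^ ((n + 1 : ℝ)⁻¹) ≤ s := by
    rw [rpow_inv_le_iff_of_pos (by positivity) hs hn]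
    exact_mod_cast h
  rwa [div_rpow (by positivity) (by positivity), ← rpow_natCast, ← rpow_natCast,
    ← rpow_mul hx, ← rpow_mul (by positivity), Nat.cast_succ, mul_inv_cancel₀ hn.ne', rpow_one,
    ← div_eq_mul_inv] at hroot

lemma succ_rpow_neg_inv_succ_le {x : ℝ} (hx : 0 ≤ x) :
    (x + 1) ^ (-(1 : ℝ) / (x + 1)) ≤ (1 + x ^ (x / (x + 1))) / (x + 1) := by
  have hx1 : 0 < x + 1 := by positivity
  have hp : x / (x + 1) ≤ 1 := (div_le_one hx1).2 (by linarith)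
  have hexp : -(1 : ℝ) / (x + 1) = x / (x + 1) - 1 := by field_simp; ring
  rw [hexp, rpow_sub hx1, rpow_one]
  gcongr
  simpa [add_comm] using rpow_add_le_add_rpow hx zero_le_one (by positivity) hp

lemma one_sub_rpow_div_succ_le {x : ℝ} (hx : 0 ≤ x) :
    1 - x ^ (x / (x + 1)) / (x + 1) ≤ 1 / (x + 1) + (1 - (x + 1) ^ (-(1 : ℝ) / (x + 1))) := by
  have h := succ_rpow_neg_inv_succ_le hx
  rw [add_div] at h
  linarith

lemma one_sub_succ_rpow_neg_inv_succ_le {x : ℝ} (hx : 0 ≤ x) :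
    1 - (x + 1) ^ (-(1 : ℝ) / (x + 1)) ≤ log (x + 1) / (x + 1) := by
  rw [neg_div, div_eq_inv_mul (log _)]
  exact one_sub_rpow_neg_le_mul_log (by positivity) _ |>.trans_eq (by rw [one_div])

/-- the analytic core of the asymptotic bound on the k-fuzz of ℤ. -/
theorem stmt19 (ε : ℝ) (hε : 0 < ε) :
    ∃ K : ℕ, ∀ k : ℕ, K ≤ k →
      (∀ σ : ℝ, σ ∈ Set.Icc (0:ℝ) 1 →
        (k : ℝ) ^ k / ((k : ℝ) + 1) ^ (k + 1) ≤ (1 - σ) ^ (k + 1) →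
        σ ≤ (1 + (1 + ε) * Real.log ((k : ℝ) + 1)) / ((k : ℝ) + 1)) ∧
      (1 - (k : ℝ) ^ ((k : ℝ) / ((k : ℝ) + 1)) / ((k : ℝ) + 1) ≤
          1 / ((k : ℝ) + 1) + (1 - ((k : ℝ) + 1) ^ (-(1 : ℝ) / ((k : ℝ) + 1))) ∧
        1 / ((k : ℝ) + 1) + (1 - ((k : ℝ) + 1) ^ (-(1 : ℝ) / ((k : ℝ) + 1))) ≤
          (1 + (1 + ε) * Real.log ((k : ℝ) + 1)) / ((k : ℝ) + 1)) := by
  refine ⟨0, fun k _ => ?_⟩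
  have hk : (0 : ℝ) ≤ k := k.cast_nonneg
  have hroot := one_sub_rpow_div_succ_le hk
  have hlog : 1 / ((k : ℝ) + 1) + (1 - ((k : ℝ) + 1) ^ (-(1 : ℝ) / ((k : ℝ) + 1))) ≤
      (1 + (1 + ε) * log ((k : ℝ) + 1)) / ((k : ℝ) + 1) :=
    calc _ ≤ 1 / ((k : ℝ) + 1) + log ((k : ℝ) + 1) / ((k : ℝ) + 1) :=
          add_le_add_right (one_sub_succ_rpow_neg_inv_succ_le hk) _
      _ ≤ (1 + (1 + ε) * log ((k : ℝ) + 1)) / ((k : ℝ) + 1) := by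
          rw [← add_div]
          gcongr
          nlinarith [log_nonneg (by linarith : (1 : ℝ) ≤ k + 1)]
  refine ⟨fun σ hσ h => ?_, hroot, hlog⟩
  have := rpow_div_div_succ_le_of_le_pow hk (sub_nonneg.2 hσ.2) k h
  linarith
end
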